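/- arXiv:1401.2026 — 2 statements merged into one kernel-verified Lean document; each statement's English description precedes it below -/
import Mathlib

section
/- Let n ≥ 1, let H be an n×n Hermitian complex matrix, let A₁, …, A_N be n×n complex matrices, let t₁, …, t_N and β be real numbers, and let 1 ≤ k ≤ N. Writing α_z(A) = exp(izH) A exp(−izH) for complex z, one has tr( α_{t₁}(A₁) ⋯ α_{t_{k−1}}(A_{k−1}) · α_{t_k+iβ}(A_k) ⋯ α_{t_N+iβ}(A_N) · exp(−βH) ) = tr( α_{t_k}(A_k) ⋯ α_{t_N}(A_N) · α_{t₁}(A₁) ⋯ α_{t_{k−1}}(A_{k−1}) · exp(−βH) ). (This is the full n-point KMS boundary condition for the finite-dimensional Gibbs state.) -/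
open Matrix Complex

/-
Conjugation by `exp(izH)` is multiplicative and `α_{z+w} = α_w ∘ α_z`, so shifting every time of a
product by `iβ` conjugates the whole product: `α_{iβ}(X) = e^{-βH} X e^{βH}`. The factor `e^{βH}`
cancels against the Gibbs weight `e^{-βH}`, and cyclicity of the trace moves the shifted block to
the front.
-/

/-- The complexified time evolution `α_z(A) = exp(izH) A exp(−izH)` for `z ∈ ℂ`. -/
noncomputable def gibbsEvolve {n : ℕ} (H : Matrix (Fin n) (Fin n) ℂ) (z : ℂ)
    (A : Matrix (Fin n) (Fin n) ℂ) : Matrix (Fin n) (Fin n) ℂ :=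
  NormedSpace.exp ((Complex.I * z) • H) * A * NormedSpace.exp ((-(Complex.I * z)) • H)

section MatrixExp

variable {m 𝕜 : Type*} [Fintype m] [DecidableEq m] [RCLike 𝕜]

theorem exp_smul_mul_exp_smul (H : Matrix m m 𝕜) (a b : 𝕜) :
    NormedSpace.exp (a • H) * NormedSpace.exp (b • H) = NormedSpace.exp ((a + b) • H) := by
  rw [add_smul, Matrix.exp_add_of_commute]
  exact ((Commute.refl H).smul_left a).smul_right b

theorem exp_smul_mul_exp_neg_smul (H : Matrix m m 𝕜) (a : 𝕜) :
    NormedSpace.exp (a • H) * NormedSpace.exp (-a • H) = 1 := by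
  rw [exp_smul_mul_exp_smul, add_neg_cancel, zero_smul, NormedSpace.exp_zero]

end MatrixExp

section GibbsEvolve

variable {n : ℕ} (H : Matrix (Fin n) (Fin n) ℂ)

theorem gibbsEvolve_one (z : ℂ) : gibbsEvolve H z 1 = 1 := by
  rw [gibbsEvolve, mul_one, exp_smul_mul_exp_neg_smul]

theorem gibbsEvolve_mul (z : ℂ) (A B : Matrix (Fin n) (Fin n) ℂ) :
    gibbsEvolve H z (A * B) = gibbsEvolve H z A * gibbsEvolve H z B := by
  have hcancel := exp_smul_mul_exp_neg_smul H (-(I * z))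
  rw [neg_neg] at hcancel
  simp only [gibbsEvolve, mul_assoc]
  rw [← mul_assoc (NormedSpace.exp (-(I * z) • H)), hcancel, one_mul]

noncomputable def gibbsEvolveMonoidHom (z : ℂ) :
    Matrix (Fin n) (Fin n) ℂ →* Matrix (Fin n) (Fin n) ℂ where
  toFun := gibbsEvolve H z
  map_one' := gibbsEvolve_one H z
  map_mul' := gibbsEvolve_mul H z

theorem gibbsEvolve_list_prod (z : ℂ) (l : List (Matrix (Fin n) (Fin n) ℂ)) :
    gibbsEvolve H z l.prod = (l.map (gibbsEvolve H z)).prod :=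
  map_list_prod (gibbsEvolveMonoidHom H z) l

theorem gibbsEvolve_add (z w : ℂ) (A : Matrix (Fin n) (Fin n) ℂ) :
    gibbsEvolve H (z + w) A = gibbsEvolve H w (gibbsEvolve H z A) := by
  simp only [gibbsEvolve, mul_assoc, exp_smul_mul_exp_smul]
  simp only [← mul_assoc, exp_smul_mul_exp_smul]
  ring_nf

theorem gibbsEvolve_I_mul (s : ℂ) (A : Matrix (Fin n) (Fin n) ℂ) :
    gibbsEvolve H (I * s) A = NormedSpace.exp (-s • H) * A * NormedSpace.exp (s • H) := by
  have hI : I * (I * s) = -s := by rw [← mul_assoc, I_mul_I, neg_one_mul]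
  rw [gibbsEvolve, hI, neg_neg]

theorem trace_mul_gibbsEvolve_I_mul_mul_exp (s : ℂ) (P Q : Matrix (Fin n) (Fin n) ℂ) :
    trace (P * gibbsEvolve H (I * s) Q * NormedSpace.exp (-s • H)) =
      trace (Q * P * NormedSpace.exp (-s • H)) := by
  have hcancel : P * gibbsEvolve H (I * s) Q * NormedSpace.exp (-s • H) =
      P * NormedSpace.exp (-s • H) * Q := by
    rw [gibbsEvolve_I_mul, mul_assoc, mul_assoc, exp_smul_mul_exp_neg_smul, mul_one, mul_assoc]
  rw [hcancel, trace_mul_comm, mul_assoc]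

end GibbsEvolve

theorem gibbs_kms_npoint_boundary_condition_general
    (n : ℕ)
    (H : Matrix (Fin n) (Fin n) ℂ)
    (N : ℕ) (A : ℕ → Matrix (Fin n) (Fin n) ℂ) (t : ℕ → ℝ) (β : ℝ)
    (k : ℕ) :
    Matrix.trace
      ((((List.range (k - 1)).map fun i => gibbsEvolve H (t (i + 1)) (A (i + 1))).prod *
        (((List.range (N + 1 - k)).map fun j =>
            gibbsEvolve H ((t (j + k) : ℂ) + Complex.I * (β : ℂ)) (A (j + k))).prod) *
        NormedSpace.exp ((-(β : ℂ)) • H))) =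
    Matrix.trace
      ((((List.range (N + 1 - k)).map fun j =>
            gibbsEvolve H (t (j + k)) (A (j + k))).prod) *
        (((List.range (k - 1)).map fun i => gibbsEvolve H (t (i + 1)) (A (i + 1))).prod) *
        NormedSpace.exp ((-(β : ℂ)) • H)) := by
  have hshift : (fun j => gibbsEvolve H ((t (j + k) : ℂ) + I * β) (A (j + k))) =
      gibbsEvolve H (I * β) ∘ fun j => gibbsEvolve H (t (j + k)) (A (j + k)) :=
    funext fun j => gibbsEvolve_add H _ _ _
  rw [hshift, ← List.map_map, ← gibbsEvolve_list_prod, trace_mul_gibbsEvolve_I_mul_mul_exp]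

/-- The full `n`-point KMS boundary condition for the finite-dimensional Gibbs state:
for an `n × n` Hermitian matrix `H`, matrices `A₁, …, A_N`, real times `t₁, …, t_N`, a
real inverse temperature `β`, and `1 ≤ k ≤ N`,
`tr(α_{t₁}(A₁) ⋯ α_{t_{k−1}}(A_{k−1}) · α_{t_k+iβ}(A_k) ⋯ α_{t_N+iβ}(A_N) · e^{−βH})
= tr(α_{t_k}(A_k) ⋯ α_{t_N}(A_N) · α_{t₁}(A₁) ⋯ α_{t_{k−1}}(A_{k−1}) · e^{−βH})`. -/
theorem gibbs_kms_npoint_boundary_condition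
    (n : ℕ) (hn : 1 ≤ n)
    (H : Matrix (Fin n) (Fin n) ℂ) (hH : H.IsHermitian)
    (N : ℕ) (A : ℕ → Matrix (Fin n) (Fin n) ℂ) (t : ℕ → ℝ) (β : ℝ)
    (k : ℕ) (hk1 : 1 ≤ k) (hkN : k ≤ N) :
    Matrix.trace
      ((((List.range (k - 1)).map fun i => gibbsEvolve H (t (i + 1)) (A (i + 1))).prod *
        (((List.range (N + 1 - k)).map fun j =>
            gibbsEvolve H ((t (j + k) : ℂ) + Complex.I * (β : ℂ)) (A (j + k))).prod) *
        NormedSpace.exp ((-(β : ℂ)) • H))) =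
    Matrix.trace
      ((((List.range (N + 1 - k)).map fun j =>
            gibbsEvolve H (t (j + k)) (A (j + k))).prod) *
        (((List.range (k - 1)).map fun i => gibbsEvolve H (t (i + 1)) (A (i + 1))).prod) *
        NormedSpace.exp ((-(β : ℂ)) • H)) :=
  gibbs_kms_npoint_boundary_condition_general n H N A t β k
end

section
/- Let a > 0, let ξ₁, ξ₂, ρ be real numbers, and let z ∈ ℂ with 0 < Im z < 2π/a. Then a⁻² ( e^{2aξ₁} + e^{2aξ₂} − 2 e^{a(ξ₁+ξ₂)} cosh(a z) ) + ρ² ≠ 0, where cosh is the complex hyperbolic cosine. (This is the nonvanishing of the complexified squared Minkowski interval between two Rindler-wedge points, analytically continued in the boost parameter z into the open strip of width 2π/a; it is the analytic core of the statement that the Minkowski vacuum restricted to the Rindler wedge satisfies the KMS condition at inverse temperature β = 2π/a.) -/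
/-!
Put `u = e^{aξ₁}`, `v = e^{aξ₂}` and `w = az`. If the interval vanished, `cosh w` would equal
the real number `(u² + v² + a²ρ²) / (2uv)`, which is at least `1` by AM–GM. But on the strip
`0 < Im w < 2π` the value `cosh w = cosh (Re w) cos (Im w) + i sinh (Re w) sin (Im w)` is real
only on the line `Re w = 0`, where it is `cos (Im w) < 1`, and on the line `Im w = π`, where it is
`-cosh (Re w) ≤ -1`.
-/

namespace Complex

theorem cosh_re (w : ℂ) : (cosh w).re = Real.cosh w.re * Real.cos w.im := by
  conv_lhs => rw [← re_add_im w, cosh_add, cosh_mul_I, sinh_mul_I]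
  simp [cosh_ofReal_re, cos_ofReal_re, sinh_ofReal_im, sin_ofReal_im]

theorem cosh_im (w : ℂ) : (cosh w).im = Real.sinh w.re * Real.sin w.im := by
  conv_lhs => rw [← re_add_im w, cosh_add, cosh_mul_I, sinh_mul_I]
  simp [sinh_ofReal_re, sin_ofReal_re, cosh_ofReal_im, cos_ofReal_im]

theorem cosh_ne_ofReal_of_one_le {w : ℂ} (h0 : 0 < w.im) (h2π : w.im < 2 * Real.pi) {r : ℝ}
    (hr : 1 ≤ r) : cosh w ≠ r := by
  intro h
  have hre : Real.cosh w.re * Real.cos w.im = r := by rw [← cosh_re, h, ofReal_re]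
  have him : Real.sinh w.re * Real.sin w.im = 0 := by rw [← cosh_im, h, ofReal_im]
  rcases mul_eq_zero.1 him with hx | hθ
  · rw [Real.sinh_eq_zero.1 hx, Real.cosh_zero, one_mul] at hre
    have hcos : Real.cos w.im = 1 := le_antisymm (Real.cos_le_one _) (hre ▸ hr)
    have := (Real.cos_eq_one_iff_of_lt_of_lt (by linarith [Real.pi_pos]) h2π).1 hcos
    linarith
  · have hπ : w.im - Real.pi = 0 := by
      refine (Real.sin_eq_zero_iff_of_lt_of_lt (by linarith) (by linarith)).1 ?_
      rw [Real.sin_sub_pi, hθ, neg_zero]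
    rw [sub_eq_zero.1 hπ, Real.cos_pi] at hre
    linarith [Real.one_le_cosh w.re]

theorem mul_sq_add_sq_sub_two_mul_mul_cosh_add_ne_zero {c u v s : ℝ} (hc : 0 < c) (hu : 0 < u)
    (hv : 0 < v) (hs : 0 ≤ s) {w : ℂ} (h0 : 0 < w.im) (h2π : w.im < 2 * Real.pi) :
    (c : ℂ) * ((u : ℂ) ^ 2 + (v : ℂ) ^ 2 - 2 * u * v * cosh w) + s ≠ 0 := by
  intro h
  refine cosh_ne_ofReal_of_one_le h0 h2π (r := (u ^ 2 + v ^ 2 + s / c) / (2 * u * v)) ?_ ?_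
  · rw [one_le_div (by positivity)]
    linarith [two_mul_le_add_sq u v, div_nonneg hs hc.le]
  · have hc' : (c : ℂ) ≠ 0 := ofReal_ne_zero.2 hc.ne'
    have hu' : (u : ℂ) ≠ 0 := ofReal_ne_zero.2 hu.ne'
    have hv' : (v : ℂ) ≠ 0 := ofReal_ne_zero.2 hv.ne'
    push_cast
    field_simp
    linear_combination -h

end Complex

/-- Nonvanishing of the complexified squared Minkowski interval between two points of
the right Rindler wedge, analytically continued in the boost parameter `z` into the
open strip `0 < Im z < 2π/a`: for `a > 0`, real `ξ₁, ξ₂, ρ`, and such `z`,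
`a⁻²(e^{2aξ₁} + e^{2aξ₂} − 2 e^{a(ξ₁+ξ₂)} cosh(az)) + ρ² ≠ 0`.
This is the analytic core of the statement that the Minkowski vacuum restricted to the
Rindler wedge satisfies the KMS condition at inverse temperature `β = 2π/a`. -/
theorem rindler_complexified_interval_ne_zero
    (a : ℝ) (ha : 0 < a) (ξ₁ ξ₂ ρ : ℝ) (z : ℂ)
    (him0 : 0 < z.im) (him1 : z.im < 2 * Real.pi / a) :
    ((a : ℂ)⁻¹) ^ 2 *
        ((Real.exp (2 * a * ξ₁) : ℂ) + (Real.exp (2 * a * ξ₂) : ℂ) -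
          2 * (Real.exp (a * (ξ₁ + ξ₂)) : ℂ) * Complex.cosh ((a : ℂ) * z)) +
      (ρ : ℂ) ^ 2 ≠ 0 := by
  have hw : (a * z).im = a * z.im := Complex.im_ofReal_mul a z
  have hexp (x : ℝ) : Real.exp (2 * x) = Real.exp x ^ 2 := by
    rw [← Real.exp_nat_mul, Nat.cast_ofNat]
  rw [mul_assoc 2 a, mul_assoc 2 a, hexp, hexp, mul_add, Real.exp_add, Complex.ofReal_mul, ← mul_assoc]
  exact_mod_cast Complex.mul_sq_add_sq_sub_two_mul_mul_cosh_add_ne_zero (by positivity : 0 < a⁻¹ ^ 2)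
    (Real.exp_pos (a * ξ₁)) (Real.exp_pos (a * ξ₂)) (sq_nonneg ρ) (w := a * z)
    (hw ▸ mul_pos ha him0) (hw ▸ (lt_div_iff₀' ha).1 him1)
end
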